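/- Let q be a prime power and let H be a subgroup of PGL₂(F_q), acting naturally on the projective line P¹(F_q) by Möbius transformations. Then at most three orbits of H on P¹(F_q) are short, i.e., at most three orbits have cardinality strictly less than |H|. -/
import Mathlib


/-- The Möbius transformation `x ↦ (ax+b)/(cx+d)` on the projective line
`P¹(F) = F ∪ {∞}`, with `none` playing the role of `∞`. -/
def mobiusMap {F : Type*} [Field F] [DecidableEq F] (a b c d : F) :
    Option F → Option F
  | none => if c = 0 then none else some (a / c)
  | some x => if c * x + d = 0 then none else some ((a * x + b) / (c * x + d))

/-- A permutation of `P¹(F)` is Möbius if it is given by some `(ax+b)/(cx+d)`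
with `ad - bc ≠ 0`; such permutations are exactly the elements of `PGL₂(F_q)`
in its natural action on the projective line. -/
def IsMobius {F : Type*} [Field F] [DecidableEq F] (σ : Equiv.Perm (Option F)) : Prop :=
  ∃ a b c d : F, a * d - b * c ≠ 0 ∧ ∀ x, σ x = mobiusMap a b c d x

/-- A nonidentity Möbius transformation cannot have three distinct fixed points. -/
lemma mobius_three_fixed {F : Type*} [Field F] [DecidableEq F]
    (σ : Equiv.Perm (Option F)) (hσ : IsMobius σ) (hne : σ ≠ 1)
    {x y z : Option F} (hx : σ x = x) (hy : σ y = y) (hz : σ z = z)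
    (hxy : x ≠ y) (hxz : x ≠ z) (hyz : y ≠ z) : False := by
  obtain ⟨a, b, c, d, hdet, hmap⟩ := hσ
  -- equation satisfied by finite fixed points
  have key : ∀ u : F, σ (some u) = some u → a * u + b = u * (c * u + d) := by
    intro u hu
    rw [hmap] at hu
    simp only [mobiusMap] at hu
    by_cases h0 : c * u + d = 0
    · simp [h0] at hu
    · rw [if_neg h0] at hu
      exact (div_eq_iff h0).mp (Option.some_injective _ hu)
  by_cases hc : c = 0
  · subst hc
    have ha : a ≠ 0 := fun h => hdet (by simp [h])
    have hd : d ≠ 0 := fun h => hdet (by simp [h])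
    -- two distinct finite fixed points
    obtain ⟨u, v, huv, hu, hv⟩ :
        ∃ u v : F, u ≠ v ∧ σ (some u) = some u ∧ σ (some v) = some v := by
      rcases x with _ | u <;> rcases y with _ | v <;> rcases z with _ | w
      · exact absurd rfl hxy
      · exact absurd rfl hxy
      · exact absurd rfl hxz
      · exact ⟨v, w, fun h => hyz (congrArg some h), hy, hz⟩
      · exact absurd rfl hyz
      · exact ⟨u, w, fun h => hxz (congrArg some h), hx, hz⟩
      · exact ⟨u, v, fun h => hxy (congrArg some h), hx, hy⟩
      · exact ⟨u, v, fun h => hxy (congrArg some h), hx, hy⟩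
    have eu := key u hu
    have ev := key v hv
    have had : a = d := by
      have h1 : (a - d) * (u - v) = 0 := by linear_combination eu - ev
      rcases mul_eq_zero.mp h1 with h | h
      · exact sub_eq_zero.mp h
      · exact absurd (sub_eq_zero.mp h) huv
    have hb : b = 0 := by
      subst had
      linear_combination eu
    subst had hb
    apply hne
    apply Equiv.ext
    intro w
    rw [hmap]
    rcases w with _ | t
    · simp [mobiusMap]
    · simp [mobiusMap, hd, mul_comm a t, mul_div_assoc, div_self ha]
  · -- c ≠ 0 : none is not fixed, all three fixed points are finite
    have hnone : σ none ≠ none := by rw [hmap]; simp [mobiusMap, hc]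
    have getF : ∀ w : Option F, σ w = w → ∃ u : F, w = some u := by
      intro w hw
      rcases w with _ | u
      · exact absurd hw hnone
      · exact ⟨u, rfl⟩
    obtain ⟨u, rfl⟩ := getF x hx
    obtain ⟨v, rfl⟩ := getF y hy
    obtain ⟨w, rfl⟩ := getF z hz
    have huv : u ≠ v := fun h => hxy (congrArg some h)
    have huw : u ≠ w := fun h => hxz (congrArg some h)
    have hvw : v ≠ w := fun h => hyz (congrArg some h)
    have eu := key u hx
    have ev := key v hy
    have ew := key w hz
    have h1 : (c * (u + v) - (a - d)) * (u - v) = 0 := by linear_combination ev - eu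
    have h2 : (c * (u + w) - (a - d)) * (u - w) = 0 := by linear_combination ew - eu
    have g1 : c * (u + v) = a - d :=
      sub_eq_zero.mp ((mul_eq_zero.mp h1).resolve_right (sub_ne_zero.mpr huv))
    have g2 : c * (u + w) = a - d :=
      sub_eq_zero.mp ((mul_eq_zero.mp h2).resolve_right (sub_ne_zero.mpr huw))
    have : v = w := by
      have := g1.trans g2.symm
      have h3 : c * (v - w) = 0 := by linear_combination this
      rcases mul_eq_zero.mp h3 with h | h
      · exact absurd h hc
      · exact sub_eq_zero.mp h
    exact hvw this

open MulAction

/-- A subgroup `H` of `PGL₂(F_q)`, acting naturally on `P¹(F_q)` by Möbius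
transformations, has at most three short orbits (orbits of size `< |H|`). -/
theorem stmt7 {F : Type*} [Field F] [Fintype F] [DecidableEq F]
    (H : Subgroup (Equiv.Perm (Option F))) (hH : ∀ σ ∈ H, IsMobius σ) :
    {O : Set (Option F) | (∃ x, O = MulAction.orbit H x) ∧ O.ncard < Nat.card H}.ncard
      ≤ 3 := by
  classical
  letI : Fintype H := Fintype.ofFinite H
  letI : ∀ σ : H, Fintype (fixedBy (Option F) σ) := fun _ => Fintype.ofFinite _
  letI : Fintype (Quotient (orbitRel H (Option F))) := Fintype.ofFinite _
  letI : ∀ ω : Quotient (orbitRel H (Option F)),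
      Fintype (orbit H (Quotient.out ω)) := fun _ => Fintype.ofFinite _
  letI : ∀ x : Option F, Fintype (orbit H x) := fun _ => Fintype.ofFinite _
  letI : ∀ x : Option F, Fintype (stabilizer H x) := fun _ => Fintype.ofFinite _
  set Ω := Quotient (orbitRel H (Option F)) with hΩ
  set N := Fintype.card H with hN
  have hNcard : Nat.card H = N := Nat.card_eq_fintype_card
  have hNpos : 0 < N := Fintype.card_pos
  set cc : Ω → ℕ := fun ω => Fintype.card (orbit H (Quotient.out ω)) with hcc
  -- each fixed-point set of a nontrivial element has at most 2 elements
  have hfix : ∀ σ : H, σ ≠ 1 → Fintype.card (fixedBy (Option F) (σ : H)) ≤ 2 := by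
    intro σ hσ1
    by_contra hlt
    push_neg at hlt
    obtain ⟨⟨x, hx⟩, ⟨y, hy⟩, ⟨z, hz⟩, hab, hac, hbc⟩ := Fintype.two_lt_card_iff.mp hlt
    have hval : (σ : Equiv.Perm (Option F)) ≠ 1 := fun h => hσ1 (Subtype.ext h)
    exact mobius_three_fixed _ (hH σ σ.2) hval hx hy hz
      (fun h => hab (Subtype.ext h)) (fun h => hac (Subtype.ext h))
      (fun h => hbc (Subtype.ext h))
  -- Burnside
  have hburn : (∑ σ : H, Fintype.card (fixedBy (Option F) σ))
      = Fintype.card Ω * N :=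
    MulAction.sum_card_fixedBy_eq_card_orbits_mul_card_group H (Option F)
  -- total points = sum of orbit sizes
  have hsumorb : (∑ ω : Ω, cc ω) = Fintype.card (Option F) := by
    rw [← Fintype.card_sigma]
    exact (Fintype.card_congr (selfEquivSigmaOrbits H (Option F))).symm
  -- orbit sizes divide N
  have hdvd : ∀ ω : Ω, cc ω ∣ N := by
    intro ω
    exact ⟨Fintype.card (stabilizer H (Quotient.out ω)),
      (MulAction.card_orbit_mul_card_stabilizer_eq_card_group H _).symm⟩
  have hshort2 : ∀ ω : Ω, cc ω < N → 2 * cc ω ≤ N := by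
    intro ω hlt
    obtain ⟨k, hk⟩ := hdvd ω
    rcases k with _ | _ | k
    · omega
    · omega
    · calc 2 * cc ω ≤ cc ω * (k + 2) := by nlinarith
        _ = N := hk.symm
  have hle : ∀ ω : Ω, cc ω ≤ N := fun ω => Nat.le_of_dvd hNpos (hdvd ω)
  -- Burnside upper bound
  have hub : Fintype.card Ω * N ≤ Fintype.card (Option F) + 2 * (N - 1) := by
    rw [← hburn, ← Finset.add_sum_erase Finset.univ _ (Finset.mem_univ (1 : H))]
    have h1 : Fintype.card (fixedBy (Option F) (1 : H)) ≤ Fintype.card (Option F) :=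
      Fintype.card_le_of_injective Subtype.val Subtype.val_injective
    have h2 : ∑ σ ∈ Finset.univ.erase (1 : H), Fintype.card (fixedBy (Option F) σ)
        ≤ (N - 1) * 2 := by
      have := Finset.sum_le_card_nsmul (Finset.univ.erase (1 : H))
        (fun σ => Fintype.card (fixedBy (Option F) σ)) 2
        (fun σ hσ => hfix σ (Finset.ne_of_mem_erase hσ))
      simpa [Finset.card_erase_of_mem, hN] using this
    omega
  -- short-orbit count
  set A : Finset Ω := Finset.univ.filter (fun ω => cc ω < N) with hA
  have hlower : 2 * Fintype.card (Option F) + A.card * N ≤ 2 * (Fintype.card Ω * N) := by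
    have hsplit : ∑ ω : Ω, 2 * cc ω
        = ∑ ω ∈ A, 2 * cc ω + ∑ ω ∈ Finset.univ.filter (fun ω => ¬ cc ω < N), 2 * cc ω :=
      (Finset.sum_filter_add_sum_filter_not _ _ _).symm
    have hA1 : ∑ ω ∈ A, 2 * cc ω ≤ A.card * N :=
      Finset.sum_le_card_nsmul _ _ N (fun ω hω => hshort2 ω (Finset.mem_filter.mp hω).2)
    have hB1 : ∑ ω ∈ Finset.univ.filter (fun ω => ¬ cc ω < N), 2 * cc ω
        ≤ (Finset.univ.filter (fun ω => ¬ cc ω < N)).card * (2 * N) :=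
      Finset.sum_le_card_nsmul _ _ (2 * N)
        (fun ω _ => by have := hle ω; omega)
    have hcards : A.card + (Finset.univ.filter (fun ω => ¬ cc ω < N)).card
        = Fintype.card Ω := by
      rw [hA, Finset.card_filter_add_card_filter_not, Finset.card_univ]
    have hsum2 : ∑ ω : Ω, 2 * cc ω = 2 * Fintype.card (Option F) := by
      rw [← hsumorb, Finset.mul_sum]
    nlinarith [hsplit, hA1, hB1]
  have hAcard : A.card ≤ 3 := by
    have h2 : 4 * (N - 1) + 4 = 4 * N := by omega
    have h4 : A.card * N + 4 ≤ 4 * N := by linarith [hub, hlower]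
    by_contra hcon
    push_neg at hcon
    have h5 : 4 * N ≤ A.card * N := Nat.mul_le_mul_right N hcon
    linarith
  -- the set of short orbits is the image of A
  have himg : {O : Set (Option F) | (∃ x, O = MulAction.orbit H x) ∧ O.ncard < Nat.card H}
      ⊆ (fun ω : Ω => (orbit H (Quotient.out ω) : Set (Option F))) '' {ω : Ω | cc ω < N} := by
    rintro O ⟨⟨x, rfl⟩, hshort⟩
    refine ⟨Quotient.mk _ x, ?_, ?_⟩
    · have hrel : (Quotient.mk (orbitRel H (Option F)) x).out ∈ orbit H x :=
        MulAction.orbitRel_apply.mp (Quotient.mk_out' x)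
      have horb : orbit H ((Quotient.mk (orbitRel H (Option F)) x).out) = orbit H x :=
        MulAction.orbit_eq_iff.mpr hrel
      simp only [Set.mem_setOf_eq, hcc, horb]
      rwa [← Nat.card_coe_set_eq, Nat.card_eq_fintype_card, hNcard] at hshort
    · have hrel : (Quotient.mk (orbitRel H (Option F)) x).out ∈ orbit H x :=
        MulAction.orbitRel_apply.mp (Quotient.mk_out' x)
      exact MulAction.orbit_eq_iff.mpr hrel
  calc {O : Set (Option F) | (∃ x, O = MulAction.orbit H x) ∧ O.ncard < Nat.card H}.ncard
      ≤ ((fun ω : Ω => (orbit H (Quotient.out ω) : Set (Option F))) '' {ω : Ω | cc ω < N}).ncard :=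
        Set.ncard_le_ncard himg ((Set.toFinite _).image _)
    _ ≤ {ω : Ω | cc ω < N}.ncard := Set.ncard_image_le (Set.toFinite _)
    _ = A.card := by
        rw [hA, Set.ncard_eq_toFinset_card']
        congr 1
        ext ω
        simp
    _ ≤ 3 := hAcard
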